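/- arXiv:2511.00691 — 3 statements merged into one kernel-verified Lean document; each statement's English description precedes it below -/
import Mathlib

section
/- A commutative cancellative monoid M is a finite factorization monoid if and only if M is atomic and M is an IDF monoid. -/
/-- The set of factorizations of `a`: multisets of atoms (irreducible elements), counted up
to associates, whose product is associated to `a`. -/
def FactorizationsOf {α : Type*} [CommMonoid α] (a : α) : Set (Multiset (Associates α)) :=
  {s | (∀ p ∈ s, Irreducible p) ∧ s.prod = Associates.mk a}

/-- An element is atomic if it is a unit or a finite product of atoms; equivalently, some
finite multiset of atoms has product associated to it. -/
def IsAtomicElem {α : Type*} [CommMonoid α] (a : α) : Prop :=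
  ∃ s : Multiset α, (∀ p ∈ s, Irreducible p) ∧ Associated s.prod a

/-- A monoid is a finite factorization monoid (FFM) if every element has a nonempty finite
set of factorizations. -/
def IsFFM (α : Type*) [CommMonoid α] : Prop :=
  ∀ a : α, (FactorizationsOf a).Nonempty ∧ (FactorizationsOf a).Finite

/-- A monoid has the IDF property if every element is divisible by only finitely many
atoms up to associates. -/
def IsIDFMonoid (α : Type*) [CommMonoid α] : Prop :=
  ∀ a : α, {p : Associates α | Irreducible p ∧ p ∣ Associates.mk a}.Finite

/-!
Atomicity is exactly the nonemptiness of the sets of factorizations. Every atom `p` dividing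
`a` occurs in some factorization of `a` (prepend `p` to a factorization of `a / p`), so finitely
many factorizations involve only finitely many atoms. Conversely, if only finitely many atoms
divide `a`, the factorizations of `a` are multisets over a finite set; by cancellativity none of
them is contained in another, and Dickson's lemma says such an antichain is finite.
-/

theorem Set.Finite.finite_of_isAntichain_of_forall_mem {α : Type*} {s : Set α} (hs : s.Finite)
    {A : Set (Multiset α)} (hA : IsAntichain (· ≤ ·) A)
    (hAs : ∀ m ∈ A, ∀ x ∈ m, x ∈ s) :
    A.Finite := by
  classical
  have := hs.to_subtype
  let count : Multiset α → s → ℕ := fun m x => m.count x.1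
  have le_of_count_le : ∀ m ∈ A, ∀ m', count m ≤ count m' → m ≤ m' := by
    intro m hm m' h
    refine Multiset.le_iff_count.2 fun x => ?_
    by_cases hx : x ∈ m
    · exact h ⟨x, hAs m hm x hx⟩
    · simp [Multiset.count_eq_zero_of_notMem hx]
  have count_injOn : A.InjOn count := fun m hm m' hm' h =>
    le_antisymm (le_of_count_le m hm m' h.le) (le_of_count_le m' hm' m h.ge)
  refine Set.Finite.of_finite_image (WellQuasiOrderedLE.finite_of_isAntichain ?_) count_injOn
  rintro _ ⟨m, hm, rfl⟩ _ ⟨m', hm', rfl⟩ hne hle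
  exact hne (congrArg count (hA.eq hm hm' (le_of_count_le m hm m' hle)))

namespace Associates

theorem irreducible_mk_iff {M : Type*} [CommMonoid M] {a : M} :
    Irreducible (Associates.mk a) ↔ Irreducible a := by
  simp only [irreducible_iff, isUnit_mk, forall_associated, mk_mul_mk,
    mk_eq_mk_iff_associated, Associated.comm (x := a)]
  refine Iff.rfl.and ⟨fun h x y hxy => h x y (hxy ▸ .refl _), ?_⟩
  rintro h x y ⟨u, rfl⟩
  simpa using h (mul_assoc _ _ _)

instance {M : Type*} [CancelCommMonoid M] : IsLeftCancelMul (Associates M) where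
  mul_left_cancel a b c h := by
    obtain ⟨a, rfl⟩ := mk_surjective a
    obtain ⟨b, rfl⟩ := mk_surjective b
    obtain ⟨c, rfl⟩ := mk_surjective c
    obtain ⟨u, hu⟩ := mk_eq_mk_iff_associated.1 (by simpa only [mk_mul_mk] using h)
    exact mk_eq_mk_iff_associated.2 ⟨u, mul_left_cancel (a := a) (by rw [← hu, mul_assoc])⟩

end Associates

section CommMonoid

variable {M : Type*} [CommMonoid M]

theorem isAtomicElem_iff_nonempty_factorizationsOf {a : M} :
    IsAtomicElem a ↔ (FactorizationsOf a).Nonempty := by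
  constructor
  · rintro ⟨s, hs, hsa⟩
    refine ⟨s.map Associates.mk, fun p hp => ?_, ?_⟩
    · obtain ⟨x, hx, rfl⟩ := Multiset.mem_map.1 hp
      exact Associates.irreducible_mk_iff.2 (hs x hx)
    · rw [Associates.prod_mk, Associates.mk_eq_mk_iff_associated]
      exact hsa
  · rintro ⟨t, ht, hta⟩
    obtain ⟨s, rfl⟩ := Multiset.map_surjective_of_surjective Associates.mk_surjective t
    refine ⟨s, fun x hx => ?_, ?_⟩
    · exact Associates.irreducible_mk_iff.1 (ht _ (Multiset.mem_map_of_mem _ hx))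
    · rwa [Associates.prod_mk, Associates.mk_eq_mk_iff_associated] at hta

theorem cons_mem_factorizationsOf {a b : M} {p : Associates M} {s : Multiset (Associates M)}
    (hs : s ∈ FactorizationsOf b) (hp : Irreducible p)
    (hpb : p * Associates.mk b = Associates.mk a) :
    p ::ₘ s ∈ FactorizationsOf a := by
  refine ⟨fun q hq => ?_, ?_⟩
  · rcases Multiset.mem_cons.1 hq with rfl | hq
    exacts [hp, hs.1 q hq]
  · rw [Multiset.prod_cons, hs.2, hpb]

theorem IsFFM.isIDFMonoid (h : IsFFM M) : IsIDFMonoid M := by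
  intro a
  refine ((h a).2.biUnion fun s _ => s.finite_toSet).subset ?_
  rintro p ⟨hp, b, hab⟩
  obtain ⟨b, rfl⟩ := Associates.mk_surjective b
  obtain ⟨s, hs⟩ := (h b).1
  exact Set.mem_biUnion (cons_mem_factorizationsOf hs hp hab.symm) (by simp)

end CommMonoid

section CancelCommMonoid

variable {M : Type*} [CancelCommMonoid M]

theorem isAntichain_factorizationsOf (a : M) : IsAntichain (· ≤ ·) (FactorizationsOf a) := by
  rintro s hs t ht hne hst
  obtain ⟨r, rfl⟩ := Multiset.le_iff_exists_add.1 hst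
  have hprod : r.prod = 1 := by
    rw [← mul_eq_left (a := s.prod), ← Multiset.prod_add, ht.2, hs.2]
  have hr : r = 0 := Multiset.eq_zero_of_forall_notMem fun q hq =>
    (ht.1 q (Multiset.mem_add.2 (Or.inr hq))).not_isUnit
      (Associates.prod_eq_one_iff.1 hprod q hq ▸ isUnit_one)
  exact hne (by rw [hr, add_zero])

theorem finite_factorizationsOf {a : M}
    (ha : {p : Associates M | Irreducible p ∧ p ∣ Associates.mk a}.Finite) :
    (FactorizationsOf a).Finite :=
  ha.finite_of_isAntichain_of_forall_mem (isAntichain_factorizationsOf a) fun _ hs p hp =>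
    ⟨hs.1 p hp, hs.2 ▸ Multiset.dvd_prod hp⟩

end CancelCommMonoid

/-- A commutative cancellative monoid is an FFM if and only if it is atomic
and has the IDF property. -/
theorem ffm_iff_atomic_and_idf (M : Type*) [CancelCommMonoid M] :
    IsFFM M ↔ (∀ a : M, IsAtomicElem a) ∧ IsIDFMonoid M := by
  simp only [isAtomicElem_iff_nonempty_factorizationsOf]
  exact ⟨fun h => ⟨fun a => (h a).1, h.isIDFMonoid⟩,
    fun ⟨hatomic, hidf⟩ a => ⟨hatomic a, finite_factorizationsOf (hidf a)⟩⟩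
end

section
/- Let T be an integral domain, K a subring of T that is a field, and M a nonzero maximal ideal of T such that T = K + M (every element of T is the sum of an element of K and an element of M). Let k be a subfield of K and set R = k + M, a subring of T. If M contains no irreducible element of T, then R is a U-FFD if and only if T is a U-FFD. -/
/-- An integral domain is an unrestricted finite factorization domain (U-FFD) if every
nonzero atomic element has only finitely many factorizations. -/
def IsUFFD (R : Type*) [CommRing R] : Prop :=
  ∀ a : R, a ≠ 0 → IsAtomicElem a → (FactorizationsOf a).Finite

/-! Write `T = K + M` and `R = k + M`. Since `K ∩ M = 0`, an element of `T` is determined modulo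
`M` by its `K`-component; comparing these components shows that an element `x ∈ R \ M` divides in
`R` every element of `R` it divides in `T`. Moreover every `t ∉ M` is a unit of `K` times an
element of `1 + M ⊆ R`. Consequently units and atoms of `R` are exactly the units and atoms of `T`
lying in `R`, every atom of `T` is associated to one of `R`, and, because atomic elements avoid the
prime `M` (it contains no atoms), atomic elements of `R` associated in `T` are associated in `R`.
The map `Associates R → Associates T` therefore identifies the factorizations of an atomic
`a ∈ R` with those of `a` in `T`. -/

namespace Associates

variable {α β : Type*} [CommMonoid α] [CommMonoid β]

def map (f : α →* β) : Associates α →* Associates β where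
  toFun := Quotient.map f fun _ _ h => h.map f
  map_one' := congrArg Associates.mk f.map_one
  map_mul' := by rintro ⟨a⟩ ⟨b⟩; exact congrArg Associates.mk (f.map_mul a b)

@[simp]
theorem map_mk (f : α →* β) (a : α) : map f (Associates.mk a) = Associates.mk (f a) := rfl

end Associates

namespace Multiset

variable {α β : Type*}

theorem exists_map_eq_of_forall_mem {g : α → β} {p : α → Prop} {u : Multiset β}
    (h : ∀ b ∈ u, ∃ a, p a ∧ g a = b) : ∃ v : Multiset α, (∀ a ∈ v, p a) ∧ v.map g = u := by
  induction u using Multiset.induction_on with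
  | empty => exact ⟨0, by simp, rfl⟩
  | cons b u ih =>
    obtain ⟨a, ha, rfl⟩ := h b (mem_cons_self _ _)
    obtain ⟨v, hv, rfl⟩ := ih fun b hb => h b (mem_cons_of_mem hb)
    exact ⟨a ::ₘ v, forall_mem_cons.2 ⟨ha, hv⟩, map_cons _ _ _⟩

theorem map_injOn {g : α → β} {s : Set α} (hg : s.InjOn g) :
    {v : Multiset α | ∀ a ∈ v, a ∈ s}.InjOn (map g) := by
  intro v hv w hw hvw
  lift v to Multiset s using hv
  lift w to Multiset s using hw
  simp only [map_map] at hvw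
  rw [map_injective hg.injective hvw]

end Multiset

section Factorizations

variable {α β : Type*} [CommMonoidWithZero α] [CommMonoidWithZero β]

theorem factorizationsOf_congr {a b : α} (h : Associated a b) :
    FactorizationsOf a = FactorizationsOf b := by
  simp only [FactorizationsOf, Associates.mk_eq_mk_iff_associated.2 h]

theorem isAtomicElem_iff_factorizationsOf_nonempty {a : α} :
    IsAtomicElem a ↔ (FactorizationsOf a).Nonempty := by
  constructor
  · rintro ⟨s, hs, hsa⟩
    refine ⟨s.map Associates.mk, ?_, ?_⟩
    · simpa [Associates.irreducible_mk] using hs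
    · rw [Associates.prod_mk, Associates.mk_eq_mk_iff_associated]
      exact hsa
  · rintro ⟨u, hu, hua⟩
    obtain ⟨s, rfl⟩ := Multiset.map_surjective_of_surjective Associates.mk_surjective u
    refine ⟨s, fun p hp => ?_, ?_⟩
    · exact Associates.irreducible_mk.1 (hu _ (Multiset.mem_map_of_mem _ hp))
    · rwa [Associates.prod_mk, Associates.mk_eq_mk_iff_associated] at hua

theorem IsAtomicElem.map {F : Type*} [FunLike F α β] [MonoidHomClass F α β] (f : F)
    (hf : ∀ p, Irreducible p → Irreducible (f p)) {a : α} (ha : IsAtomicElem a) :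
    IsAtomicElem (f a) := by
  obtain ⟨s, hs, hsa⟩ := ha
  refine ⟨s.map f, fun q hq => ?_, ?_⟩
  · obtain ⟨p, hp, rfl⟩ := Multiset.mem_map.1 hq
    exact hf p (hs p hp)
  · rw [← map_multiset_prod]
    exact hsa.map f

theorem IsAtomicElem.notMem {R : Type*} [CommRing R] {P : Ideal R} (hP : P.IsPrime)
    (hirr : ∀ p ∈ P, ¬ Irreducible p) {a : R} (ha : IsAtomicElem a) : a ∉ P := by
  obtain ⟨s, hs, u, rfl⟩ := ha
  rw [P.mul_unit_mem_iff_mem u.isUnit, hP.multiset_prod_mem_iff_exists_mem]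
  rintro ⟨p, hp, hpP⟩
  exact hirr p hpP (hs p hp)

end Factorizations

section Transfer

variable {α β : Type*} [CommMonoidWithZero α] [CommMonoidWithZero β] (f : α →* β)

theorem injOn_associatesMap_irreducible
    (h_assoc : ∀ x y, IsAtomicElem x → Associated (f x) (f y) → Associated x y) :
    {p : Associates α | Irreducible p}.InjOn (Associates.map f) := by
  rintro ⟨x⟩ hx ⟨y⟩ - hxy
  have hx : Irreducible x := Associates.irreducible_mk.1 hx
  refine Associates.mk_eq_mk_iff_associated.2 (h_assoc x y ⟨{x}, by simpa using hx, ?_⟩ ?_)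
  · simp
  · exact Associates.mk_eq_mk_iff_associated.1 hxy

theorem map_mem_factorizationsOf (hf : ∀ x, Irreducible x → Irreducible (f x)) {a : α}
    {v : Multiset (Associates α)} (hv : v ∈ FactorizationsOf a) :
    v.map (Associates.map f) ∈ FactorizationsOf (f a) := by
  refine ⟨fun q hq => ?_, ?_⟩
  · obtain ⟨⟨x⟩, hx, rfl⟩ := Multiset.mem_map.1 hq
    exact Associates.irreducible_mk.2 (hf x (Associates.irreducible_mk.1 (hv.1 _ hx)))
  · rw [← map_multiset_prod, hv.2, Associates.map_mk]

theorem exists_map_eq_of_mem_factorizationsOf (h_irr : ∀ x, Irreducible (f x) ↔ Irreducible x)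
    (h_lift : ∀ q, Irreducible q → ∃ r, Associated (f r) q) {t : β}
    {u : Multiset (Associates β)} (hu : u ∈ FactorizationsOf t) :
    ∃ a, ∃ v ∈ FactorizationsOf a, v.map (Associates.map f) = u ∧ Associated (f a) t := by
  obtain ⟨v, hv, rfl⟩ : ∃ v : Multiset (Associates α),
      (∀ p ∈ v, Irreducible p) ∧ v.map (Associates.map f) = u := by
    refine Multiset.exists_map_eq_of_forall_mem fun q hq => ?_
    obtain ⟨y, rfl⟩ := Associates.mk_surjective q
    obtain ⟨r, hr⟩ := h_lift y (Associates.irreducible_mk.1 (hu.1 _ hq))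
    refine ⟨Associates.mk r, ?_, Associates.mk_eq_mk_iff_associated.2 hr⟩
    rw [Associates.irreducible_mk, ← h_irr]
    exact hr.symm.irreducible (Associates.irreducible_mk.1 (hu.1 _ hq))
  obtain ⟨a, ha⟩ := Associates.mk_surjective v.prod
  refine ⟨a, v, ⟨hv, ha.symm⟩, rfl, Associates.mk_eq_mk_iff_associated.1 ?_⟩
  rw [← hu.2, ← map_multiset_prod, ← ha, Associates.map_mk]

theorem finite_factorizationsOf_of_finite_map (h_irr : ∀ x, Irreducible (f x) ↔ Irreducible x)
    (h_assoc : ∀ x y, IsAtomicElem x → Associated (f x) (f y) → Associated x y) {a : α}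
    (h : (FactorizationsOf (f a)).Finite) : (FactorizationsOf a).Finite :=
  h.of_injOn (fun _ hv => map_mem_factorizationsOf f (fun x => (h_irr x).2) hv)
    ((Multiset.map_injOn (injOn_associatesMap_irreducible f h_assoc)).mono fun _ hv => hv.1)

theorem factorizationsOf_subset_image_map (h_irr : ∀ x, Irreducible (f x) ↔ Irreducible x)
    (h_lift : ∀ q, Irreducible q → ∃ r, Associated (f r) q)
    (h_assoc : ∀ x y, IsAtomicElem x → Associated (f x) (f y) → Associated x y) {a : α} {t : β}
    (hat : Associated (f a) t) :
    FactorizationsOf t ⊆ Multiset.map (Associates.map f) '' FactorizationsOf a := by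
  intro u hu
  obtain ⟨b, v, hv, rfl, hbt⟩ := exists_map_eq_of_mem_factorizationsOf f h_irr h_lift hu
  have hba : Associated b a :=
    h_assoc b a (isAtomicElem_iff_factorizationsOf_nonempty.2 ⟨v, hv⟩) (hbt.trans hat.symm)
  exact ⟨v, factorizationsOf_congr hba ▸ hv, rfl⟩

end Transfer

theorem isUFFD_iff_of_injective {R T : Type*} [CommRing R] [CommRing T] (f : R →+* T)
    (hf : Function.Injective f) (h_irr : ∀ x, Irreducible (f x) ↔ Irreducible x)
    (h_lift : ∀ q, Irreducible q → ∃ r, Associated (f r) q)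
    (h_assoc : ∀ x y, IsAtomicElem x → Associated (f x) (f y) → Associated x y) :
    IsUFFD R ↔ IsUFFD T := by
  constructor
  · intro hR t ht0 ht
    obtain ⟨u, hu⟩ := isAtomicElem_iff_factorizationsOf_nonempty.1 ht
    obtain ⟨a, v, hv, -, hat⟩ := exists_map_eq_of_mem_factorizationsOf (f : R →* T) h_irr h_lift hu
    have ha0 : a ≠ 0 := by
      rintro rfl
      exact ht0 (by simpa using hat.symm)
    exact ((hR a ha0 (isAtomicElem_iff_factorizationsOf_nonempty.2 ⟨v, hv⟩)).image _).subset
      (factorizationsOf_subset_image_map (f : R →* T) h_irr h_lift h_assoc hat)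
  · intro hT a ha0 ha
    refine finite_factorizationsOf_of_finite_map (f : R →* T) h_irr h_assoc (hT (f a) ?_ ?_)
    · exact (map_ne_zero_iff f hf).2 ha0
    · exact ha.map f fun x => (h_irr x).2

theorem exists_mul_eq_one_of_isField {T : Type*} [CommRing T] {S : Subring T} (hS : IsField S)
    {a : T} (haS : a ∈ S) (ha0 : a ≠ 0) : ∃ b ∈ S, a * b = 1 := by
  obtain ⟨b, hb⟩ := hS.mul_inv_cancel (a := ⟨a, haS⟩) fun h => ha0 (congrArg Subtype.val h)
  exact ⟨b, b.2, congrArg Subtype.val hb⟩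

structure IsDPlusM {T : Type*} [CommRing T] (K : Subring T) (M : Ideal T) (k R : Subring T) :
    Prop where
  isField_K : IsField K
  isMaximal : M.IsMaximal
  exists_add : ∀ t : T, ∃ a ∈ K, ∃ m ∈ M, t = a + m
  le_K : k ≤ K
  isField_k : IsField k
  mem_R : ∀ x : T, x ∈ R ↔ ∃ a ∈ k, ∃ m ∈ M, x = a + m

namespace IsDPlusM

variable {T : Type*} [CommRing T] {K : Subring T} {M : Ideal T} {k R : Subring T}
  (h : IsDPlusM K M k R)
include h

theorem eq_zero_of_mem_K_of_mem_M {a : T} (haK : a ∈ K) (haM : a ∈ M) : a = 0 := by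
  by_contra ha0
  obtain ⟨b, -, hab⟩ := exists_mul_eq_one_of_isField h.isField_K haK ha0
  exact h.isMaximal.ne_top ((Ideal.eq_top_iff_one M).2 (hab ▸ M.mul_mem_right b haM))

theorem exists_mem_K_sub_mem (t : T) : ∃ a ∈ K, t - a ∈ M := by
  obtain ⟨a, ha, m, hm, rfl⟩ := h.exists_add t
  exact ⟨a, ha, by simpa using hm⟩

theorem mem_R_iff (x : T) : x ∈ R ↔ ∃ a ∈ k, x - a ∈ M := by
  rw [h.mem_R x]
  refine exists_congr fun a => and_congr_right fun _ => ⟨?_, fun hm => ⟨x - a, hm, by ring⟩⟩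
  rintro ⟨m, hm, rfl⟩
  simpa using hm

theorem mem_R_of_mem_M {m : T} (hm : m ∈ M) : m ∈ R :=
  (h.mem_R_iff m).2 ⟨0, k.zero_mem, by simpa using hm⟩

theorem mem_R_of_mul_mem_R {x t : T} (hx : x ∈ R) (hxM : x ∉ M) (hxt : x * t ∈ R) : t ∈ R := by
  obtain ⟨a, hak, haM⟩ := (h.mem_R_iff x).1 hx
  obtain ⟨d, hdK, hdM⟩ := h.exists_mem_K_sub_mem t
  obtain ⟨e, hek, heM⟩ := (h.mem_R_iff _).1 hxt
  have ha0 : a ≠ 0 := by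
    rintro rfl
    exact hxM (by simpa using haM)
  -- both `a * d` and `e` are the `K`-component of `x * t`
  have hade : a * d - e = 0 := by
    refine h.eq_zero_of_mem_K_of_mem_M (K.sub_mem (K.mul_mem (h.le_K hak) hdK) (h.le_K hek)) ?_
    have : a * d - e = (x * t - e) - (x - a) * t - a * (t - d) := by ring
    rw [this]
    exact M.sub_mem (M.sub_mem heM (M.mul_mem_right _ haM)) (M.mul_mem_left _ hdM)
  obtain ⟨a', ha'k, haa'⟩ := exists_mul_eq_one_of_isField h.isField_k hak ha0
  have hd : d = a' * e := by linear_combination a' * hade - d * haa'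
  exact (h.mem_R_iff t).2 ⟨d, hd ▸ k.mul_mem ha'k hek, hdM⟩

theorem exists_unit_mul_mem_R (t : T) : ∃ u : Tˣ, ↑u * t ∈ R := by
  by_cases htM : t ∈ M
  · exact ⟨1, by simpa using h.mem_R_of_mem_M htM⟩
  obtain ⟨b, hbK, hbM⟩ := h.exists_mem_K_sub_mem t
  have hb0 : b ≠ 0 := by
    rintro rfl
    exact htM (by simpa using hbM)
  obtain ⟨c, -, hbc⟩ := exists_mul_eq_one_of_isField h.isField_K hbK hb0
  refine ⟨Units.mkOfMulEqOne c b (by rw [mul_comm, hbc]), (h.mem_R_iff _).2 ⟨1, k.one_mem, ?_⟩⟩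
  have : c * t - 1 = c * (t - b) := by linear_combination hbc
  simpa [this] using M.mul_mem_left c hbM

theorem isUnit_coe_iff (x : R) : IsUnit (x : T) ↔ IsUnit x := by
  refine ⟨fun hx => ?_, fun hx => hx.map R.subtype⟩
  have hxM : (x : T) ∉ M := fun hxM => h.isMaximal.ne_top (M.eq_top_of_isUnit_mem hxM hx)
  have hinv : ↑hx.unit⁻¹ ∈ R := h.mem_R_of_mul_mem_R x.2 hxM (by simp)
  exact IsUnit.of_mul_eq_one (a := x) ⟨_, hinv⟩ (Subtype.ext (by simp))

theorem exists_unit_mul_mem_R_of_mul_eq {x y z : T} (hx : x ∈ R) (hyz : y * z = x) :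
    ∃ u : Tˣ, ↑u * y ∈ R ∧ ↑u⁻¹ * z ∈ R := by
  by_cases hyM : y ∈ M
  · obtain ⟨v, hv⟩ := h.exists_unit_mul_mem_R z
    exact ⟨v⁻¹, h.mem_R_of_mem_M (M.mul_mem_left _ hyM), by rwa [inv_inv]⟩
  obtain ⟨u, hu⟩ := h.exists_unit_mul_mem_R y
  refine ⟨u, hu, h.mem_R_of_mul_mem_R hu ((M.unit_mul_mem_iff_mem u.isUnit).not.2 hyM) ?_⟩
  rwa [mul_mul_mul_comm, Units.mul_inv, one_mul, hyz]

theorem irreducible_coe_iff (x : R) : Irreducible (x : T) ↔ Irreducible x := by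
  simp only [irreducible_iff, h.isUnit_coe_iff]
  refine and_congr_right fun _ => ⟨fun hT a b hab => ?_, fun hR y z hyz => ?_⟩
  · simpa only [h.isUnit_coe_iff] using hT (congrArg Subtype.val hab)
  · obtain ⟨u, hyR, hzR⟩ := h.exists_unit_mul_mem_R_of_mul_eq x.2 hyz.symm
    have hprod : x = ⟨_, hyR⟩ * ⟨_, hzR⟩ := by
      ext
      rw [hyz, Subring.coe_mul, mul_mul_mul_comm, Units.mul_inv, one_mul]
    rcases hR hprod with hu | hu
    · exact Or.inl ((Units.isUnit_units_mul u y).1 ((h.isUnit_coe_iff _).2 hu))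
    · exact Or.inr ((Units.isUnit_units_mul u⁻¹ z).1 ((h.isUnit_coe_iff _).2 hu))

theorem associated_of_coe {x y : R} (hxM : (x : T) ∉ M) (hxy : Associated (x : T) (y : T)) :
    Associated x y := by
  obtain ⟨u, hu⟩ := hxy
  have huR : (u : T) ∈ R := h.mem_R_of_mul_mem_R x.2 hxM (hu ▸ y.2)
  have hunit : IsUnit (⟨u, huR⟩ : R) := (h.isUnit_coe_iff _).1 u.isUnit
  exact ⟨hunit.unit, Subtype.ext hu⟩

theorem exists_associated_coe (q : T) : ∃ r : R, Associated (r : T) q := by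
  obtain ⟨u, hu⟩ := h.exists_unit_mul_mem_R q
  exact ⟨⟨_, hu⟩, associated_unit_mul_left q u u.isUnit⟩

theorem associated_of_isAtomicElem (hirr : ∀ p ∈ M, ¬ Irreducible p) {x y : R}
    (hx : IsAtomicElem x) (hxy : Associated (x : T) (y : T)) : Associated x y :=
  h.associated_of_coe (IsAtomicElem.notMem h.isMaximal.isPrime hirr
    (hx.map R.subtype fun p => (h.irreducible_coe_iff p).2)) hxy

end IsDPlusM

theorem uffd_DplusM_without_irreducible_general (T : Type*) [CommRing T]
    (K : Subring T) (hK : IsField K)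
    (M : Ideal T) (hMmax : M.IsMaximal)
    (hTKM : ∀ t : T, ∃ a ∈ K, ∃ m ∈ M, t = a + m)
    (k : Subring T) (hkK : k ≤ K) (hk : IsField k)
    (R : Subring T) (hR : ∀ x : T, x ∈ R ↔ ∃ a ∈ k, ∃ m ∈ M, x = a + m)
    (hirr : ∀ p ∈ M, ¬ Irreducible p) :
    IsUFFD R ↔ IsUFFD T := by
  have hD : IsDPlusM K M k R := ⟨hK, hMmax, hTKM, hkK, hk, hR⟩
  exact isUFFD_iff_of_injective R.subtype Subtype.val_injective hD.irreducible_coe_iff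
    (fun q _ => hD.exists_associated_coe q) fun _ _ => hD.associated_of_isAtomicElem hirr

/-- Let `T` be an integral domain, `K` a subring of `T` that is a field, and
`M` a nonzero maximal ideal of `T` such that `T = K + M`. Let `k` be a subfield of `K` and
let `R = k + M` (a subring of `T`). If `M` contains no irreducible element of `T`, then `R`
is a U-FFD if and only if `T` is a U-FFD. -/
theorem uffd_DplusM_without_irreducible (T : Type*) [CommRing T] [IsDomain T]
    (K : Subring T) (hK : IsField K)
    (M : Ideal T) (hMmax : M.IsMaximal) (hM0 : M ≠ ⊥)
    (hTKM : ∀ t : T, ∃ a ∈ K, ∃ m ∈ M, t = a + m)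
    (k : Subring T) (hkK : k ≤ K) (hk : IsField k)
    (R : Subring T) (hR : ∀ x : T, x ∈ R ↔ ∃ a ∈ k, ∃ m ∈ M, x = a + m)
    (hirr : ∀ p ∈ M, ¬ Irreducible p) :
    IsUFFD R ↔ IsUFFD T :=
  uffd_DplusM_without_irreducible_general T K hK M hMmax hTKM k hkK hk R hR hirr
end

section
/- There exists an integral domain R that is a U-FFD such that the polynomial ring R[X] is not a U-FFD; that is, the unrestricted finite factorization property does not ascend to polynomial extensions. -/
/-!
Take `R = 𝔽₂[M]` for the monoid `M = {0} ∪ {(q, s, v) ∈ ℚ³ : 0 ≤ s ≤ q, 0 < q}`. Since `M` is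
`2`-divisible, the Frobenius shows that every element of `R` is a square, so `R` has no atoms at
all and is trivially a U-FFD. Writing `t^m` for monomials, each `f_v = t^(1,0,v) X + t^(1,1,v)`
(`v ∈ ℚ`) is irreducible in `R[X]`, because no monomial other than `1` divides both of its
coefficients, and in characteristic `2` the middle terms cancel:
`f_v f_(-v) = t^(2,0,0) X² + t^(2,2,0) = f_0²`. The only unit of `R` is `1`, so the `f_v` are
pairwise non-associated and `f_0²` has infinitely many factorizations.
-/

open Polynomial Finset

instance AddSubmonoid.twoUniqueSums {G : Type*} [AddMonoid G] [TwoUniqueSums G]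
    (S : AddSubmonoid G) : TwoUniqueSums S :=
  .of_injective_addHom S.subtype.toAddHom Subtype.val_injective ‹_›

namespace AddMonoidAlgebra

variable {k M : Type*}

instance expChar [CommSemiring k] [AddMonoid M] (p : ℕ) [ExpChar k p] : ExpChar k[M] p :=
  expChar_of_injective_ringHom (f := (singleZeroRingHom : k →+* k[M]))
    (fun a b h ↦ by simpa using congrArg (fun f : k[M] ↦ f.coeff 0) h) p

theorem exists_pow_eq [CommSemiring k] [AddCommMonoid M] (p : ℕ) [ExpChar k p] [PerfectRing k p]
    (hM : ∀ m : M, ∃ n, p • n = m) (f : k[M]) : ∃ g : k[M], g ^ p = f := by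
  choose root hroot using hM
  refine ⟨∑ m ∈ f.coeff.support, single (root m) ((frobeniusEquiv k p).symm (f.coeff m)), ?_⟩
  simp_rw [sum_pow_char, single_pow, hroot, frobeniusEquiv_symm_pow_p]
  exact sum_coeff_single f

theorem eq_single_of_support_subset [Semiring k] {f : k[M]} {a : M}
    (h : f.coeff.support ⊆ {a}) : f = single a (f.coeff a) :=
  coeff_injective (by rw [coeff_single]; exact Finsupp.support_subset_singleton.mp h)

/-- If `f` or `g` had two monomials, `TwoUniqueSums` would give two distinct exponents of `f * g`
with nonzero coefficient. -/
theorem exists_eq_single_of_mul_eq_single [Semiring k] [NoZeroDivisors k] [Add M]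
    [TwoUniqueSums M] {f g : k[M]} {m : M} {r : k} (hr : r ≠ 0) (h : f * g = single m r) :
    ∃ a b, a + b = m ∧ f = single a (f.coeff a) ∧ g = single b (g.coeff b) := by
  set A := f.coeff.support
  set B := g.coeff.support
  have hfg : f * g ≠ 0 := h ▸ single_ne_zero.mpr hr
  have hA : A.Nonempty := Finsupp.support_nonempty_iff.mpr fun hf ↦
    hfg (by rw [coeff_eq_zero.mp hf, zero_mul])
  have hB : B.Nonempty := Finsupp.support_nonempty_iff.mpr fun hg ↦
    hfg (by rw [coeff_eq_zero.mp hg, mul_zero])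
  have unique_sum_eq {a b : M} (ha : a ∈ A) (hb : b ∈ B) (hu : UniqueAdd A B a b) :
      a + b = m := by
    by_contra hne
    have := coeff_mul_add_of_uniqueAdd hu
    rw [h, coeff_single, Finsupp.single_eq_of_ne hne] at this
    exact mul_ne_zero (Finsupp.mem_support_iff.mp ha) (Finsupp.mem_support_iff.mp hb) this.symm
  by_cases! hcard : #A ≤ 1 ∧ #B ≤ 1
  · obtain ⟨a, ha, b, hb, hu⟩ := UniqueAdd.of_card_le_one hA hB hcard.1 hcard.2
    exact ⟨a, b, unique_sum_eq ha hb hu,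
      eq_single_of_support_subset fun x hx ↦ mem_singleton.mpr (card_le_one.mp hcard.1 x hx a ha),
      eq_single_of_support_subset fun x hx ↦ mem_singleton.mpr (card_le_one.mp hcard.2 x hx b hb)⟩
  · have hAB : 1 < #A * #B := Nat.one_lt_mul_iff.mpr ⟨hA.card_pos, hB.card_pos, by omega⟩
    obtain ⟨p, hp, q, hq, hpq, hup, huq⟩ := TwoUniqueSums.uniqueAdd_of_one_lt_card hAB
    rw [mem_product] at hp hq
    have := hup hq.1 hq.2 ((unique_sum_eq hq.1 hq.2 huq).trans (unique_sum_eq hp.1 hp.2 hup).symm)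
    exact absurd (Prod.ext this.1 this.2).symm hpq

section ZModTwo

theorem single_one_add_self [AddMonoid M] (m : M) : single m (1 : ZMod 2) + single m 1 = 0 := by
  rw [← single_add, show (1 + 1 : ZMod 2) = 0 from rfl, single_zero]

variable [AddCommMonoid M] [TwoUniqueSums M]

theorem exists_eq_single_one_of_dvd {d : (ZMod 2)[M]} {m : M} (h : d ∣ single m 1) :
    ∃ x y, x + y = m ∧ d = single x 1 := by
  obtain ⟨e, he⟩ := h
  obtain ⟨x, y, hxy, hd, -⟩ := exists_eq_single_of_mul_eq_single one_ne_zero he.symm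
  have hdx : d.coeff x ≠ 0 := fun h0 ↦ by
    rw [h0, single_zero] at hd
    rw [hd, zero_mul] at he
    exact single_ne_zero.mpr one_ne_zero he
  have eq_one : ∀ c : ZMod 2, c ≠ 0 → c = 1 := by decide
  exact ⟨x, y, hxy, by rwa [eq_one _ hdx] at hd⟩

theorem subsingleton_units (hM : ∀ x y : M, x + y = 0 → x = 0) : Subsingleton (ZMod 2)[M]ˣ := by
  suffices h : ∀ u : (ZMod 2)[M]ˣ, u = 1 from ⟨fun u v ↦ (h u).trans (h v).symm⟩
  intro u
  have hu : (u : (ZMod 2)[M]) ∣ single 0 1 := by rw [← one_def]; exact u.isUnit.dvd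
  obtain ⟨x, y, hxy, hu⟩ := exists_eq_single_one_of_dvd hu
  exact Units.ext (by rw [hu, hM x y hxy, ← one_def, Units.val_one])

theorem isRelPrime_single_one {c c' : M} (h : ∀ x y z : M, x + y = c → x + z = c' → x = 0) :
    IsRelPrime (single c (1 : ZMod 2)) (single c' 1) := by
  intro d hd hd'
  obtain ⟨x, y, hxy, rfl⟩ := exists_eq_single_one_of_dvd hd
  obtain ⟨x', z, hxz, hx⟩ := exists_eq_single_one_of_dvd hd'
  obtain rfl : x = x' := single_left_injective one_ne_zero hx
  rw [h x y z hxy hxz, ← one_def]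
  exact isUnit_one

end ZModTwo

end AddMonoidAlgebra

namespace Polynomial

variable {R : Type*}

instance subsingleton_units [Semiring R] [NoZeroDivisors R] [Subsingleton Rˣ] :
    Subsingleton R[X]ˣ := by
  suffices h : ∀ u : R[X]ˣ, u = 1 from ⟨fun u v ↦ (h u).trans (h v).symm⟩
  intro u
  obtain ⟨r, hr, hu⟩ := isUnit_iff.mp u.isUnit
  rw [isUnit_iff_eq_one.mp hr, map_one] at hu
  exact Units.ext hu.symm

theorem linear_mul_linear_of_add_eq_zero [CommRing R] {a b c d : R} (h : a * d + b * c = 0) :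
    (C a * X + C b) * (C c * X + C d) = C (a * c) * X ^ 2 + C (b * d) := by
  have hC := congrArg C h
  simp only [map_add, map_mul, map_zero] at hC ⊢
  linear_combination X * hC

end Polynomial

theorem isUFFD_of_forall_not_irreducible {R : Type*} [CommRing R] (h : ∀ a : R, ¬Irreducible a) :
    IsUFFD R := by
  intro a _ _
  refine (Set.finite_singleton 0).subset fun s hs ↦ ?_
  rw [Set.mem_singleton_iff, Multiset.eq_zero_iff_forall_notMem]
  intro p hp
  obtain ⟨b, rfl⟩ := Associates.mk_surjective p
  exact h b (Associates.irreducible_mk.mp (hs.1 _ hp))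

section Factorizations

variable {ι : Type*} [Infinite ι]

theorem factorizationsOf_infinite {α : Type*} [CommMonoidWithZero α] {a : α} {p q : ι → α}
    (hp : ∀ i, Irreducible (p i)) (hq : ∀ i, Irreducible (q i))
    (hpq : ∀ i, p i * q i = a) (hp_ne : Pairwise fun i j ↦ ¬Associated (p i) (p j)) :
    (FactorizationsOf a).Infinite := by
  classical
  intro hfin
  have hmem (i : ι) : Associates.mk (p i) ∈ ⋃ s ∈ FactorizationsOf a, (s.toFinset : Set _) := by
    refine Set.mem_biUnion (x := {Associates.mk (p i), Associates.mk (q i)}) ⟨?_, ?_⟩ (by simp)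
    · simp [Associates.irreducible_mk, hp i, hq i]
    · simp [Associates.mk_mul_mk, hpq i]
  refine Set.infinite_range_of_injective (fun i j hij ↦ ?_) ((hfin.biUnion fun s _ ↦
    s.toFinset.finite_toSet).subset (Set.range_subset_iff.mpr hmem))
  by_contra hne
  exact hp_ne hne (Associates.mk_eq_mk_iff_associated.mp hij)

theorem not_isUFFD_of_forall_mul_eq {R : Type*} [CommRing R] [IsDomain R] {a : R} {p q : ι → R}
    (hp : ∀ i, Irreducible (p i)) (hq : ∀ i, Irreducible (q i))
    (hpq : ∀ i, p i * q i = a) (hp_ne : Pairwise fun i j ↦ ¬Associated (p i) (p j)) :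
    ¬IsUFFD R := by
  intro hR
  obtain ⟨i⟩ := ‹Infinite ι›.nonempty
  have ha : a ≠ 0 := hpq i ▸ mul_ne_zero (hp i).ne_zero (hq i).ne_zero
  have hatomic : IsAtomicElem a := ⟨{p i, q i}, by simp [hp i, hq i], by simp [hpq i]⟩
  exact factorizationsOf_infinite hp hq hpq hp_ne (hR a ha hatomic)

end Factorizations

open AddMonoidAlgebra

def wedge : AddSubmonoid (ℚ × ℚ × ℚ) where
  carrier := {x | 0 ≤ x.2.1 ∧ x.2.1 ≤ x.1 ∧ (x.1 = 0 → x = 0)}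
  zero_mem' := by simp
  add_mem' := by
    rintro a b ⟨ha₀, ha₁, ha⟩ ⟨hb₀, hb₁, hb⟩
    refine ⟨by simp only [Prod.snd_add, Prod.fst_add]; linarith,
      by simp only [Prod.snd_add, Prod.fst_add]; linarith, fun h ↦ ?_⟩
    simp only [Prod.fst_add] at h
    rw [ha (by linarith), hb (by linarith), add_zero]

namespace wedge

theorem eq_zero_of_fst_eq_zero {x : wedge} (h : (x : ℚ × ℚ × ℚ).1 = 0) : x = 0 :=
  Subtype.ext (x.2.2.2 h)

theorem fst_nonneg (x : wedge) : 0 ≤ (x : ℚ × ℚ × ℚ).1 := x.2.1.trans x.2.2.1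

theorem exists_two_nsmul_eq (m : wedge) : ∃ n, 2 • n = m := by
  obtain ⟨x, h₀, h₁, h⟩ := m
  refine ⟨⟨(2 : ℚ)⁻¹ • x, ?_, ?_, fun hx ↦ ?_⟩, Subtype.ext ?_⟩
  · simp only [Prod.smul_snd, Prod.smul_fst, smul_eq_mul]; positivity
  · simp only [Prod.smul_snd, Prod.smul_fst, smul_eq_mul]; linarith
  · simp only [Prod.smul_fst, smul_eq_mul, mul_eq_zero, inv_eq_zero, OfNat.ofNat_ne_zero,
      false_or] at hx
    rw [h hx, smul_zero]
  · rw [two_nsmul, AddSubmonoid.coe_add, ← add_smul]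
    norm_num

theorem eq_zero_of_add_eq_zero {x y : wedge} (h : x + y = 0) : x = 0 := by
  have h₀ := congrArg (fun w : wedge ↦ (w : ℚ × ℚ × ℚ).1) h
  simp only [AddSubmonoid.coe_add, Prod.fst_add, ZeroMemClass.coe_zero, Prod.fst_zero] at h₀
  exact eq_zero_of_fst_eq_zero (by linarith [fst_nonneg x, fst_nonneg y])

def mk₀ (v : ℚ) : wedge := ⟨(1, 0, v), by norm_num, by norm_num, by norm_num⟩

def mk₁ (v : ℚ) : wedge := ⟨(1, 1, v), by norm_num, by norm_num, by norm_num⟩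

theorem eq_zero_of_add_eq_mk₀_of_add_eq_mk₁ {x y z : wedge} {v v' : ℚ} (hy : x + y = mk₀ v)
    (hz : x + z = mk₁ v') : x = 0 := by
  have hy₁ := congrArg (fun w : wedge ↦ (w : ℚ × ℚ × ℚ).2.1) hy
  have hz₀ := congrArg (fun w : wedge ↦ (w : ℚ × ℚ × ℚ).1) hz
  have hz₁ := congrArg (fun w : wedge ↦ (w : ℚ × ℚ × ℚ).2.1) hz
  simp only [AddSubmonoid.coe_add, Prod.fst_add, Prod.snd_add, mk₀, mk₁] at hy₁ hz₀ hz₁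
  exact eq_zero_of_fst_eq_zero (by linarith [x.2.1, x.2.2.1, y.2.1, z.2.2.1])

theorem mk₀_add_mk₀_neg (v : ℚ) : mk₀ v + mk₀ (-v) = mk₀ 0 + mk₀ 0 := by
  ext <;> simp [mk₀]

theorem mk₁_add_mk₁_neg (v : ℚ) : mk₁ v + mk₁ (-v) = mk₁ 0 + mk₁ 0 := by
  ext <;> simp [mk₁]

theorem mk₀_add_mk₁_neg (v : ℚ) : mk₀ v + mk₁ (-v) = mk₁ v + mk₀ (-v) := by
  ext <;> simp [mk₀, mk₁]

end wedge

abbrev WedgeAlgebra : Type := AddMonoidAlgebra (ZMod 2) wedge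

instance : Subsingleton WedgeAlgebraˣ :=
  subsingleton_units fun _ _ ↦ wedge.eq_zero_of_add_eq_zero

theorem isUFFD_wedgeAlgebra : IsUFFD WedgeAlgebra := by
  refine isUFFD_of_forall_not_irreducible fun a ha ↦ ?_
  obtain ⟨g, rfl⟩ := exists_pow_eq 2 wedge.exists_two_nsmul_eq a
  exact not_irreducible_pow (by norm_num) ha

noncomputable def linearFactor (v : ℚ) : WedgeAlgebra[X] :=
  C (single (wedge.mk₀ v) 1) * X + C (single (wedge.mk₁ v) 1)

theorem irreducible_linearFactor (v : ℚ) : Irreducible (linearFactor v) :=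
  irreducible_C_mul_X_add_C (single_ne_zero.mpr one_ne_zero)
    (isRelPrime_single_one fun _ _ _ ↦ wedge.eq_zero_of_add_eq_mk₀_of_add_eq_mk₁)

theorem linearFactor_injective : Function.Injective linearFactor := by
  intro v w h
  have h₁ := congrArg (Polynomial.coeff · 1) h
  simp only [linearFactor, Polynomial.coeff_add, coeff_mul_X, coeff_C_zero, coeff_C_succ,
    add_zero] at h₁
  simpa [wedge.mk₀] using congrArg (fun m : wedge ↦ (m : ℚ × ℚ × ℚ).2.2)
    (single_left_injective one_ne_zero h₁)

theorem linearFactor_mul_linearFactor_neg (v : ℚ) :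
    linearFactor v * linearFactor (-v) = linearFactor 0 * linearFactor 0 := by
  have middle (w : ℚ) : single (wedge.mk₀ w) (1 : ZMod 2) * single (wedge.mk₁ (-w)) 1 +
      single (wedge.mk₁ w) 1 * single (wedge.mk₀ (-w)) 1 = 0 := by
    rw [single_mul_single, single_mul_single, wedge.mk₀_add_mk₁_neg, mul_one, single_one_add_self]
  have middle₀ := middle 0
  rw [neg_zero] at middle₀
  rw [linearFactor, linearFactor, linearFactor, linear_mul_linear_of_add_eq_zero (middle v),
    linear_mul_linear_of_add_eq_zero middle₀]
  simp only [single_mul_single, mul_one, wedge.mk₀_add_mk₀_neg, wedge.mk₁_add_mk₁_neg]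

theorem not_isUFFD_polynomial_wedgeAlgebra : ¬IsUFFD WedgeAlgebra[X] :=
  not_isUFFD_of_forall_mul_eq irreducible_linearFactor (fun v ↦ irreducible_linearFactor (-v))
    linearFactor_mul_linearFactor_neg
    fun _ _ hvw h ↦ hvw (linearFactor_injective (associated_iff_eq.mp h))

/-- There exists an integral domain `R` that is a U-FFD such that the
polynomial ring `R[X]` is not a U-FFD: the unrestricted finite factorization property does
not ascend to polynomial extensions. -/
theorem exists_uffd_with_polynomial_ring_not_uffd :
    ∃ (R : Type) (_ : CommRing R) (_ : IsDomain R),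
      IsUFFD R ∧ ¬ IsUFFD (Polynomial R) :=
  ⟨WedgeAlgebra, inferInstance, inferInstance, isUFFD_wedgeAlgebra,
    not_isUFFD_polynomial_wedgeAlgebra⟩
end
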